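/- arXiv:1911.07409 — 2 statements merged into one kernel-verified Lean document; each statement's English description precedes it below -/
import Mathlib

section
/- Let E be a real inner product space, let κ ⊆ E be a nonempty convex set of diameter at most D > 0, and let G > 0. Let T ≥ 1 be a natural number and let f₁, …, f_T : E → ℝ be convex functions, each differentiable on κ with gradient norm at most G at every point of κ. Set η = D/(G·√T). Suppose Λ₁ ∈ κ and, for each t = 1, …, T−1, Λ_{t+1} is a nearest point of κ to Λ_t − η·∇f_t(Λ_t) (i.e. Λ_{t+1} ∈ κ and ‖Λ_{t+1} − (Λ_t − η∇f_t(Λ_t))‖ ≤ ‖s − (Λ_t − η∇f_t(Λ_t))‖ for all s ∈ κ). Then for every Λ* ∈ κ, the regret satisfies ∑_{t=1}^{T} (f_t(Λ_t) − f_t(Λ*)) ≤ G·D·√T. -/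
/-!
Convexity gives `f t (Λ t) - f t Λ* ≤ ⟪g, Λ t - Λ*⟫`, and expanding the square of the gradient
step turns `2η` times this into `‖Λ t - Λ*‖² - ‖Λ t - η g - Λ*‖² + η² ‖g‖²`. Projecting onto `κ`
does not increase the distance to `Λ* ∈ κ`, so the sum over `t` telescopes to at most
`D² + T η² G²`, and `η = D / (G √T)` balances the two terms.
-/

open scoped RealInnerProductSpace

theorem ConvexOn.le_sub_of_hasFDerivAt {E : Type*} [NormedAddCommGroup E] [NormedSpace ℝ E]
    {s : Set E} {f : E → ℝ} {f' : E →L[ℝ] ℝ} {x y : E} (hf : ConvexOn ℝ s f)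
    (hx : x ∈ s) (hy : y ∈ s) (hd : HasFDerivAt f f' x) :
    f' (y - x) ≤ f y - f x := by
  have hline : ConvexOn ℝ (AffineMap.lineMap x y ⁻¹' s) (f ∘ AffineMap.lineMap x y) :=
    hf.comp_affineMap _
  have hd0 : HasDerivAt (f ∘ AffineMap.lineMap x y) (f' (y - x)) (0 : ℝ) := by
    refine HasFDerivAt.comp_hasDerivAt (0 : ℝ) ?_ AffineMap.hasDerivAt_lineMap
    simpa using hd
  simpa [slope_def_field] using hline.le_slope_of_hasDerivAt (by simpa using hx) (by simpa using hy) one_pos hd0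

theorem Convex.norm_sub_le_of_isMinOn {E : Type*} [NormedAddCommGroup E] [InnerProductSpace ℝ E]
    {K : Set E} {u p z : E} (hK : Convex ℝ K) (hp : p ∈ K)
    (hmin : IsMinOn (fun s => ‖s - u‖) K p) (hz : z ∈ K) :
    ‖p - z‖ ≤ ‖u - z‖ := by
  have : Nonempty K := ⟨⟨p, hp⟩⟩
  have hinf : ‖u - p‖ = ⨅ w : K, ‖u - w‖ := by
    refine le_antisymm (le_ciInf fun w => ?_) (ciInf_le ⟨0, ?_⟩ (⟨p, hp⟩ : K))
    · simpa only [norm_sub_rev u] using isMinOn_iff.1 hmin _ w.2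
    · exact Set.forall_mem_range.2 fun w => norm_nonneg _
  have hobtuse : ⟪u - p, z - p⟫ ≤ 0 := (norm_eq_iInf_iff_real_inner_le_zero hK hp).1 hinf z hz
  have hexpand : ‖u - z‖ ^ 2 = ‖u - p‖ ^ 2 - 2 * ⟪u - p, z - p⟫ + ‖z - p‖ ^ 2 := by
    rw [← norm_sub_sq_real, sub_sub_sub_cancel_right]
  rw [norm_sub_rev p z]
  nlinarith [norm_nonneg (u - z), norm_nonneg (z - p)]

theorem ConvexOn.gradient_step_bound {E : Type*} [NormedAddCommGroup E] [InnerProductSpace ℝ E]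
    {s : Set E} {f : E → ℝ} {x z g : E} {η G : ℝ} (hf : ConvexOn ℝ s f) (hx : x ∈ s)
    (hz : z ∈ s) (hd : HasFDerivAt f (innerSL ℝ g) x) (hg : ‖g‖ ≤ G) (hη : 0 ≤ η) :
    2 * η * (f x - f z) ≤ ‖x - z‖ ^ 2 - ‖x - η • g - z‖ ^ 2 + η ^ 2 * G ^ 2 := by
  have hlin : f x - f z ≤ ⟪g, x - z⟫ := by
    have := hf.le_sub_of_hasFDerivAt hx hz hd
    rw [innerSL_apply_apply, ← neg_sub x z, inner_neg_right] at this
    linarith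
  have hexpand : ‖x - η • g - z‖ ^ 2 = ‖x - z‖ ^ 2 - 2 * η * ⟪g, x - z⟫ + η ^ 2 * ‖g‖ ^ 2 := by
    rw [sub_right_comm, norm_sub_sq_real, inner_smul_right, real_inner_comm, norm_smul,
      Real.norm_of_nonneg hη]
    ring
  have hg2 : η ^ 2 * ‖g‖ ^ 2 ≤ η ^ 2 * G ^ 2 := by gcongr
  nlinarith

theorem Finset.sum_Icc_sub_le_of_le_succ {u v : ℕ → ℝ} {T : ℕ} (hT : 1 ≤ T)
    (h : ∀ t, 1 ≤ t → t < T → u (t + 1) ≤ v t) :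
    ∑ t ∈ Finset.Icc 1 T, (u t - v t) ≤ u 1 - v T := by
  induction T, hT using Nat.le_induction with
  | base => simp
  | succ T hT ih =>
    rw [Finset.sum_Icc_succ_top (by omega)]
    linarith [ih fun t ht1 ht => h t ht1 (by omega), h T hT (Nat.lt_succ_self T)]

theorem projected_gradient_descent_regret_le
    {E : Type*} [NormedAddCommGroup E] [InnerProductSpace ℝ E]
    {κ : Set E} (hκ : Convex ℝ κ) {G η : ℝ} (hη : 0 ≤ η) {T : ℕ} (hT : 1 ≤ T)
    {f : ℕ → E → ℝ} {g : ℕ → E → E}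
    (hconv : ∀ t ∈ Finset.Icc 1 T, ConvexOn ℝ Set.univ (f t))
    (hgrad : ∀ t ∈ Finset.Icc 1 T, ∀ x ∈ κ, HasFDerivAt (f t) (innerSL ℝ (g t x)) x)
    (hGbound : ∀ t ∈ Finset.Icc 1 T, ∀ x ∈ κ, ‖g t x‖ ≤ G)
    {Λ : ℕ → E} (hΛ1 : Λ 1 ∈ κ)
    (hstep : ∀ t : ℕ, 1 ≤ t → t + 1 ≤ T →
      Λ (t + 1) ∈ κ ∧ IsMinOn (‖· - (Λ t - η • g t (Λ t))‖) κ (Λ (t + 1)))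
    {z : E} (hz : z ∈ κ) :
    2 * η * ∑ t ∈ Finset.Icc 1 T, (f t (Λ t) - f t z) ≤ ‖Λ 1 - z‖ ^ 2 + T * (η ^ 2 * G ^ 2) := by
  have hmem : ∀ t, 1 ≤ t → t ≤ T → Λ t ∈ κ := by
    intro t ht1
    induction t, ht1 using Nat.le_induction with
    | base => exact fun _ => hΛ1
    | succ t ht _ => exact fun htT => (hstep t ht htT).1
  set y : ℕ → E := fun t => Λ t - η • g t (Λ t)
  have hdescent : ∀ t ∈ Finset.Icc 1 T,
      2 * η * (f t (Λ t) - f t z) ≤ ‖Λ t - z‖ ^ 2 - ‖y t - z‖ ^ 2 + η ^ 2 * G ^ 2 := by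
    intro t ht
    have hΛt := hmem t (Finset.mem_Icc.1 ht).1 (Finset.mem_Icc.1 ht).2
    exact (hconv t ht).gradient_step_bound (Set.mem_univ _) (Set.mem_univ _)
      (hgrad t ht _ hΛt) (hGbound t ht _ hΛt) hη
  have hproj : ∀ t, 1 ≤ t → t < T → ‖Λ (t + 1) - z‖ ^ 2 ≤ ‖y t - z‖ ^ 2 := fun t ht1 ht =>
    pow_le_pow_left₀ (norm_nonneg _)
      (hκ.norm_sub_le_of_isMinOn (hstep t ht1 ht).1 (hstep t ht1 ht).2 hz) 2
  calc 2 * η * ∑ t ∈ Finset.Icc 1 T, (f t (Λ t) - f t z)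
      ≤ ∑ t ∈ Finset.Icc 1 T, (‖Λ t - z‖ ^ 2 - ‖y t - z‖ ^ 2 + η ^ 2 * G ^ 2) := by
        rw [Finset.mul_sum]; exact Finset.sum_le_sum hdescent
    _ = ∑ t ∈ Finset.Icc 1 T, (‖Λ t - z‖ ^ 2 - ‖y t - z‖ ^ 2) + T * (η ^ 2 * G ^ 2) := by
        rw [Finset.sum_add_distrib, Finset.sum_const, Nat.card_Icc, nsmul_eq_mul,
          Nat.add_sub_cancel]
    _ ≤ ‖Λ 1 - z‖ ^ 2 - ‖y T - z‖ ^ 2 + T * (η ^ 2 * G ^ 2) := by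
        gcongr; exact Finset.sum_Icc_sub_le_of_le_succ hT hproj
    _ ≤ ‖Λ 1 - z‖ ^ 2 + T * (η ^ 2 * G ^ 2) := by nlinarith [sq_nonneg ‖y T - z‖]

theorem online_gradient_descent_regret_general
    {E : Type*} [NormedAddCommGroup E] [InnerProductSpace ℝ E]
    (κ : Set E) (hκconv : Convex ℝ κ)
    (D G : ℝ) (hD : 0 < D) (hG : 0 < G)
    (hdiam : ∀ x ∈ κ, ∀ y ∈ κ, ‖x - y‖ ≤ D)
    (T : ℕ) (hT : 1 ≤ T)
    (f : ℕ → E → ℝ) (g : ℕ → E → E)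
    (hconv : ∀ t ∈ Finset.Icc 1 T, ConvexOn ℝ Set.univ (f t))
    (hgrad : ∀ t ∈ Finset.Icc 1 T, ∀ x ∈ κ, HasFDerivAt (f t) (innerSL ℝ (g t x)) x)
    (hGbound : ∀ t ∈ Finset.Icc 1 T, ∀ x ∈ κ, ‖g t x‖ ≤ G)
    (η : ℝ) (hη : η = D / (G * Real.sqrt T))
    (Λ : ℕ → E) (hΛ1 : Λ 1 ∈ κ)
    (hstep : ∀ t : ℕ, 1 ≤ t → t + 1 ≤ T →
      Λ (t + 1) ∈ κ ∧
      ∀ s ∈ κ, ‖Λ (t + 1) - (Λ t - η • g t (Λ t))‖ ≤ ‖s - (Λ t - η • g t (Λ t))‖)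
    (Λstar : E) (hΛstar : Λstar ∈ κ) :
    ∑ t ∈ Finset.Icc 1 T, (f t (Λ t) - f t Λstar) ≤ G * D * Real.sqrt T := by
  have hsqrtT : 0 < Real.sqrt T := Real.sqrt_pos.2 (by exact_mod_cast hT)
  have hη0 : 0 < η := by rw [hη]; positivity
  have hregret := projected_gradient_descent_regret_le hκconv hη0.le hT hconv hgrad hGbound hΛ1
    hstep hΛstar
  have hinit : ‖Λ 1 - Λstar‖ ^ 2 ≤ D ^ 2 :=
    pow_le_pow_left₀ (norm_nonneg _) (hdiam _ hΛ1 _ hΛstar) 2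
  have hbalance : (T : ℝ) * (η ^ 2 * G ^ 2) = D ^ 2 := by
    rw [hη, div_pow, mul_pow, Real.sq_sqrt (Nat.cast_nonneg T)]
    field_simp
  have hscale : 2 * η * (G * D * Real.sqrt T) = 2 * D ^ 2 := by
    rw [hη]; field_simp
  exact le_of_mul_le_mul_left (by linarith) (by positivity : 0 < 2 * η)

/-- Online projected gradient descent regret bound (Theorem 3.1, OGD part):
over a nonempty convex set `κ` of diameter at most `D`, with convex losses
`f 1, …, f T` whose gradients (expressed via `g`) are bounded in norm by `G`
on `κ`, the iterates produced with step size `η = D / (G * √T)` and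
nearest-point projection onto `κ` satisfy
`∑_{t=1}^{T} (f t (Λ t) - f t Λ*) ≤ G * D * √T` for every `Λ* ∈ κ`. -/
theorem online_gradient_descent_regret
    {E : Type*} [NormedAddCommGroup E] [InnerProductSpace ℝ E]
    (κ : Set E) (hκne : κ.Nonempty) (hκconv : Convex ℝ κ)
    (D G : ℝ) (hD : 0 < D) (hG : 0 < G)
    (hdiam : ∀ x ∈ κ, ∀ y ∈ κ, ‖x - y‖ ≤ D)
    (T : ℕ) (hT : 1 ≤ T)
    (f : ℕ → E → ℝ) (g : ℕ → E → E)
    (hconv : ∀ t ∈ Finset.Icc 1 T, ConvexOn ℝ Set.univ (f t))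
    (hgrad : ∀ t ∈ Finset.Icc 1 T, ∀ x ∈ κ, HasFDerivAt (f t) (innerSL ℝ (g t x)) x)
    (hGbound : ∀ t ∈ Finset.Icc 1 T, ∀ x ∈ κ, ‖g t x‖ ≤ G)
    (η : ℝ) (hη : η = D / (G * Real.sqrt T))
    (Λ : ℕ → E) (hΛ1 : Λ 1 ∈ κ)
    (hstep : ∀ t : ℕ, 1 ≤ t → t + 1 ≤ T →
      Λ (t + 1) ∈ κ ∧
      ∀ s ∈ κ, ‖Λ (t + 1) - (Λ t - η • g t (Λ t))‖ ≤ ‖s - (Λ t - η • g t (Λ t))‖)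
    (Λstar : E) (hΛstar : Λstar ∈ κ) :
    ∑ t ∈ Finset.Icc 1 T, (f t (Λ t) - f t Λstar) ≤ G * D * Real.sqrt T :=
  online_gradient_descent_regret_general κ hκconv D G hD hG hdiam T hT f g hconv hgrad hGbound η hη
    Λ hΛ1 hstep Λstar hΛstar
end

section
/- Let m ≥ 1, let t₁ ≤ t₂ be reals, let v > 0, and for each s ∈ {1, …, m} let λ_s : [t₁, t₂] → ℝ be continuous with λ_s(t) > 0 for all t, and suppose max_{t ∈ [t₁,t₂]} λ_s(t) − min_{t ∈ [t₁,t₂]} λ_s(t) ≤ v for every s. Set y = ∑_{s=1}^m min_t λ_s(t) and Y = ∑_{s=1}^m max_t λ_s(t). Then for every j ∈ {1, …, m}, writing U(j) = (max_t λ_j(t))/y and L(j) = (min_t λ_j(t))/Y, the gap δ(j) = U(j) − L(j) satisfies δ(j) ≤ (m·v² + (y + m·min_t λ_j(t))·v) / (y² + m·v·y). -/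
/-!
The maximum of `λ_j` is at most `min λ_j + v`, and summing the oscillation bound over the `m`
types gives `y ≤ Y ≤ y + m v`. Hence `U(j) ≤ (min λ_j + v) / y` and
`L(j) ≥ min λ_j / (y + m v)`, and the difference of these two fractions is exactly the claimed
bound. Continuity on the compact segment is what makes `min` and `max` attained, so that
`y > 0` and `min λ_s ≤ max λ_s`.
-/

open Finset

lemma div_sub_div_le_of_le_add {a M y Y n v : ℝ} (ha : 0 ≤ a) (hy : 0 < y) (hv : 0 ≤ v)
    (hn : 0 ≤ n) (hM : M ≤ a + v) (hyY : y ≤ Y) (hY : Y ≤ y + n * v) :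
    M / y - a / Y ≤ (n * v ^ 2 + (y + n * a) * v) / (y ^ 2 + n * v * y) :=
  calc M / y - a / Y ≤ (a + v) / y - a / (y + n * v) := by
        gcongr
        exact hy.trans_le hyY
    _ = (n * v ^ 2 + (y + n * a) * v) / (y ^ 2 + n * v * y) := by
        have : 0 < y + n * v := by positivity
        field_simp
        ring

lemma sum_le_sum_add_card_mul {ι : Type*} [Fintype ι] {f g : ι → ℝ} {v : ℝ}
    (h : ∀ i, f i ≤ g i + v) : ∑ i, f i ≤ ∑ i, g i + Fintype.card ι * v :=
  calc ∑ i, f i ≤ ∑ i, (g i + v) := sum_le_sum fun i _ => h i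
    _ = ∑ i, g i + Fintype.card ι * v := by
        rw [sum_add_distrib, sum_const, card_univ, nsmul_eq_mul]

lemma IsCompact.sInf_image_pos {α : Type*} [TopologicalSpace α] {K : Set α} {f : α → ℝ}
    (hK : IsCompact K) (hne : K.Nonempty) (hf : ContinuousOn f K) (hpos : ∀ x ∈ K, 0 < f x) :
    0 < sInf (f '' K) := by
  obtain ⟨x, hx, hfx⟩ := (hK.image_of_continuousOn hf).sInf_mem (hne.image f)
  exact hfx ▸ hpos x hx

theorem confidence_gap_bound_general
    (m : ℕ) (t₁ t₂ : ℝ) (ht : t₁ ≤ t₂) (v : ℝ)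
    (lam : Fin m → ℝ → ℝ)
    (hcont : ∀ s, ContinuousOn (lam s) (Set.Icc t₁ t₂))
    (hpos : ∀ s, ∀ t ∈ Set.Icc t₁ t₂, 0 < lam s t)
    (hosc : ∀ s, sSup (lam s '' Set.Icc t₁ t₂) - sInf (lam s '' Set.Icc t₁ t₂) ≤ v) :
    ∀ j : Fin m,
      sSup (lam j '' Set.Icc t₁ t₂) / (∑ s, sInf (lam s '' Set.Icc t₁ t₂)) -
        sInf (lam j '' Set.Icc t₁ t₂) / (∑ s, sSup (lam s '' Set.Icc t₁ t₂)) ≤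
      (m * v ^ 2 + ((∑ s, sInf (lam s '' Set.Icc t₁ t₂)) + m * sInf (lam j '' Set.Icc t₁ t₂)) * v) /
        ((∑ s, sInf (lam s '' Set.Icc t₁ t₂)) ^ 2 + m * v * (∑ s, sInf (lam s '' Set.Icc t₁ t₂))) := by
  intro j
  have hK : (Set.Icc t₁ t₂).Nonempty := Set.nonempty_Icc.2 ht
  have inf_pos s : 0 < sInf (lam s '' Set.Icc t₁ t₂) :=
    isCompact_Icc.sInf_image_pos hK (hcont s) (hpos s)
  have inf_le_sup s : sInf (lam s '' Set.Icc t₁ t₂) ≤ sSup (lam s '' Set.Icc t₁ t₂) :=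
    have hc := isCompact_Icc.image_of_continuousOn (hcont s)
    Real.sInf_le_sSup _ hc.bddBelow hc.bddAbove
  have sup_le s : sSup (lam s '' Set.Icc t₁ t₂) ≤ sInf (lam s '' Set.Icc t₁ t₂) + v := by
    linarith [hosc s]
  have hv : 0 ≤ v := by linarith [hosc j, inf_le_sup j]
  have hy : 0 < ∑ s, sInf (lam s '' Set.Icc t₁ t₂) := sum_pos (fun s _ => inf_pos s) ⟨j, mem_univ j⟩
  have hyY := sum_le_sum fun s (_ : s ∈ univ) => inf_le_sup s
  have hYy := sum_le_sum_add_card_mul sup_le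
  rw [Fintype.card_fin] at hYy
  exact div_sub_div_le_of_le_add (inf_pos j).le hy hv m.cast_nonneg (sup_le j) hyY hYy

/-- Theorem 4.4 (confidence-gap bound): if each rate function has oscillation at
most `v` on `[t₁, t₂]`, then with `y = ∑_s min λ_s` and `Y = ∑_s max λ_s`, the
gap `δ(j) = U(j) − L(j) = (max λ_j)/y − (min λ_j)/Y` satisfies
`δ(j) ≤ (m·v² + (y + m·min λ_j)·v) / (y² + m·v·y)`. -/
theorem confidence_gap_bound
    (m : ℕ) (hm : 1 ≤ m) (t₁ t₂ : ℝ) (ht : t₁ ≤ t₂) (v : ℝ) (hv : 0 < v)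
    (lam : Fin m → ℝ → ℝ)
    (hcont : ∀ s, ContinuousOn (lam s) (Set.Icc t₁ t₂))
    (hpos : ∀ s, ∀ t ∈ Set.Icc t₁ t₂, 0 < lam s t)
    (hosc : ∀ s, sSup (lam s '' Set.Icc t₁ t₂) - sInf (lam s '' Set.Icc t₁ t₂) ≤ v) :
    ∀ j : Fin m,
      sSup (lam j '' Set.Icc t₁ t₂) / (∑ s, sInf (lam s '' Set.Icc t₁ t₂)) -
        sInf (lam j '' Set.Icc t₁ t₂) / (∑ s, sSup (lam s '' Set.Icc t₁ t₂)) ≤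
      (m * v ^ 2 + ((∑ s, sInf (lam s '' Set.Icc t₁ t₂)) + m * sInf (lam j '' Set.Icc t₁ t₂)) * v) /
        ((∑ s, sInf (lam s '' Set.Icc t₁ t₂)) ^ 2 + m * v * (∑ s, sInf (lam s '' Set.Icc t₁ t₂))) :=
  confidence_gap_bound_general m t₁ t₂ ht v lam hcont hpos hosc
end
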